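/- arXiv:1709.01037 — 4 statements merged into one kernel-verified Lean document; each statement's English description precedes it below -/
import Mathlib

section
/- If a map f: R^d → R^m satisfies (1−ε)‖x−y‖ ≤ ‖f(x)−f(y)‖ ≤ (1+ε)‖x−y‖ for all x,y in a finite set S ⊂ R^d, where ε ∈ [0,1), then the radius ρ of the smallest enclosing ball satisfies (1−ε)ρ(S) ≤ ρ(f(S)) ≤ (1+ε)ρ(S). -/
/-!
For probability weights `w` on points `xᵢ` and any point `c`,
`∑ᵢⱼ wᵢ wⱼ ‖xᵢ - xⱼ‖² = 2 ∑ᵢ wᵢ ‖xᵢ - c‖² - 2 ‖∑ᵢ wᵢ (xᵢ - c)‖²`.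
Hence this weighted spread is at most `2ρ²` whenever the ball of radius `ρ` about `c` encloses
the points, and it equals `2ρ²` when `c` is the barycentre of the `w` and all `xᵢ` with `wᵢ > 0`
lie on the sphere: this is the situation at a centre of the points minimising the farthest
distance, which lies in the convex hull of the farthest points (otherwise moving towards that hull
would decrease the farthest distance). Since the spread only depends on pairwise distances, a map
stretching them by at most `L` stretches the smallest enclosing radius by at most `L`; apply this
to `f` with `L = 1 + ε` and to its inverse on `f '' S` with `L = (1 - ε)⁻¹`.
-/

open MeasureTheory ProbabilityTheory Metric

noncomputable def encRadius {d : ℕ} (S : Set (EuclideanSpace ℝ (Fin d))) : ℝ :=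
  ⨅ c : EuclideanSpace ℝ (Fin d), ⨆ x ∈ S, dist x c

open Filter Topology

section WeightedSpread

variable {ι E F : Type*} [NormedAddCommGroup E] [NormedAddCommGroup F]

def weightedSpread (t : Finset ι) (w : ι → ℝ) (x : ι → E) : ℝ :=
  ∑ i ∈ t, ∑ j ∈ t, w i * w j * ‖x i - x j‖ ^ 2

variable {t : Finset ι} {w : ι → ℝ} {x : ι → E}

theorem weightedSpread_le_mul_sq {y : ι → F} (hw₀ : ∀ i ∈ t, 0 ≤ w i) {L : ℝ}
    (hxy : ∀ i ∈ t, ∀ j ∈ t, ‖y i - y j‖ ≤ L * ‖x i - x j‖) :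
    weightedSpread t w y ≤ L ^ 2 * weightedSpread t w x := by
  simp_rw [weightedSpread, Finset.mul_sum]
  refine Finset.sum_le_sum fun i hi => Finset.sum_le_sum fun j hj => ?_
  have hsq : ‖y i - y j‖ ^ 2 ≤ L ^ 2 * ‖x i - x j‖ ^ 2 := by
    rw [← mul_pow]
    exact pow_le_pow_left₀ (norm_nonneg _) (hxy i hi j hj) 2
  nlinarith [mul_nonneg (hw₀ i hi) (hw₀ j hj)]

variable [InnerProductSpace ℝ E]

theorem weightedSpread_eq (hw : ∑ i ∈ t, w i = 1) (c : E) :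
    weightedSpread t w x =
      2 * ∑ i ∈ t, w i * ‖x i - c‖ ^ 2 - 2 * ‖∑ i ∈ t, w i • (x i - c)‖ ^ 2 := by
  have hpair (i j : ι) : ‖x i - x j‖ ^ 2 =
      ‖x i - c‖ ^ 2 + ‖x j - c‖ ^ 2 - 2 * inner ℝ (x i - c) (x j - c) := by
    rw [← sub_sub_sub_cancel_right (x i) (x j) c, norm_sub_sq_real]
    ring
  have hsum : ‖∑ i ∈ t, w i • (x i - c)‖ ^ 2 =
      ∑ i ∈ t, ∑ j ∈ t, w i * w j * inner ℝ (x i - c) (x j - c) := by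
    rw [← real_inner_self_eq_norm_sq, sum_inner]
    simp_rw [inner_sum, real_inner_smul_left, real_inner_smul_right, mul_assoc]
  have hmarg (v : ι → ℝ) : ∑ i ∈ t, ∑ j ∈ t, w i * w j * v i = ∑ i ∈ t, w i * v i := by
    simp_rw [mul_right_comm (w _) (w _), ← Finset.mul_sum, hw, mul_one]
  calc weightedSpread t w x
      = ∑ i ∈ t, ∑ j ∈ t, (w i * w j * ‖x i - c‖ ^ 2 + w j * w i * ‖x j - c‖ ^ 2
          - 2 * (w i * w j * inner ℝ (x i - c) (x j - c))) := by
        unfold weightedSpread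
        congr! 2 with i _ j _
        rw [hpair]
        ring
    _ = _ := by
        rw [hsum]
        simp only [Finset.sum_sub_distrib, Finset.sum_add_distrib, ← Finset.mul_sum]
        rw [Finset.sum_comm (f := fun i j => w j * w i * ‖x j - c‖ ^ 2), hmarg]
        ring

theorem weightedSpread_le (hw₀ : ∀ i ∈ t, 0 ≤ w i) (hw₁ : ∑ i ∈ t, w i = 1) {c : E} {r : ℝ}
    (hr : ∀ i ∈ t, ‖x i - c‖ ≤ r) : weightedSpread t w x ≤ 2 * r ^ 2 := by
  have hbound : ∑ i ∈ t, w i * ‖x i - c‖ ^ 2 ≤ r ^ 2 := calc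
    _ ≤ ∑ i ∈ t, w i * r ^ 2 := Finset.sum_le_sum fun i hi =>
        mul_le_mul_of_nonneg_left (pow_le_pow_left₀ (norm_nonneg _) (hr i hi) 2) (hw₀ i hi)
    _ = r ^ 2 := by rw [← Finset.sum_mul, hw₁, one_mul]
  rw [weightedSpread_eq hw₁ c]
  nlinarith [sq_nonneg ‖∑ i ∈ t, w i • (x i - c)‖]

theorem weightedSpread_eq_of_sum_smul_eq (hw₁ : ∑ i ∈ t, w i = 1) {c : E}
    (hc : ∑ i ∈ t, w i • x i = c) {r : ℝ} (hr : ∀ i ∈ t, ‖x i - c‖ = r) :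
    weightedSpread t w x = 2 * r ^ 2 := by
  have hcentered : ∑ i ∈ t, w i • (x i - c) = 0 := by
    simp_rw [smul_sub, Finset.sum_sub_distrib, ← Finset.sum_smul, hc, hw₁, one_smul, sub_self]
  rw [weightedSpread_eq hw₁ c, hcentered, norm_zero,
    Finset.sum_congr rfl fun i hi => by rw [hr i hi], ← Finset.sum_mul, hw₁]
  ring

end WeightedSpread

section EnclosingBall

variable {ι E F : Type*} [NormedAddCommGroup E] [InnerProductSpace ℝ E]
  [NormedAddCommGroup F] [InnerProductSpace ℝ F]

theorem exists_forall_norm_sub_add_smul_lt {C : Set F} (hC : Convex ℝ C) (hCc : IsComplete C)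
    (hne : C.Nonempty) {c : F} (hc : c ∉ C) :
    ∃ p ∈ C, ∀ z ∈ C, ∀ t ∈ Set.Ioo (0 : ℝ) 2, ‖z - (c + t • (p - c))‖ < ‖z - c‖ := by
  obtain ⟨p, hpC, hp⟩ := exists_norm_eq_iInf_of_complete_convex hne hCc hC c
  have hobtuse := (norm_eq_iInf_iff_real_inner_le_zero hC hpC).1 hp
  refine ⟨p, hpC, fun z hz t ht => ?_⟩
  have hv : 0 < ‖p - c‖ := norm_pos_iff.2 (sub_ne_zero.2 fun h => hc (h ▸ hpC))
  have hinner : ‖p - c‖ ^ 2 ≤ inner ℝ (z - c) (p - c) := by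
    have h := hobtuse z hz
    rw [← neg_sub p c, inner_neg_left, real_inner_comm] at h
    rw [← sub_add_sub_cancel z p c, inner_add_left, real_inner_self_eq_norm_sq]
    linarith
  have hexpand : ‖z - (c + t • (p - c))‖ ^ 2
      = ‖z - c‖ ^ 2 - 2 * t * inner ℝ (z - c) (p - c) + t ^ 2 * ‖p - c‖ ^ 2 := by
    rw [sub_add_eq_sub_sub, norm_sub_sq_real, real_inner_smul_right, norm_smul,
      Real.norm_of_nonneg ht.1.le]
    ring
  refine lt_of_pow_lt_pow_left₀ 2 (norm_nonneg _) ?_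
  rw [hexpand]
  nlinarith [ht.1, ht.2, mul_pos ht.1 (sub_pos.2 ht.2), pow_pos hv 2]

theorem exists_center_mem_convexHull_farthest (A : Finset F) (hA : A.Nonempty) :
    ∃ c r, (∀ z ∈ A, ‖z - c‖ ≤ r) ∧ c ∈ convexHull ℝ ↑(A.filter fun z => ‖z - c‖ = r) := by
  set K := convexHull ℝ (A : Set F)
  set G : F → ℝ := fun q => A.sup' hA fun z => ‖z - q‖
  have hG : Continuous G := Continuous.finset_sup'_apply hA fun z _ => by fun_prop
  obtain ⟨c, hcK, hcmin⟩ := (A.finite_toSet.isCompact_convexHull (𝕜 := ℝ)).exists_isMinOn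
    (hA.to_set.convexHull) hG.continuousOn
  have hle : ∀ z ∈ A, ‖z - c‖ ≤ G c := fun z hz => A.le_sup' (fun z => ‖z - c‖) hz
  refine ⟨c, G c, hle, ?_⟩
  by_contra hc
  set T := A.filter fun z => ‖z - c‖ = G c
  have hT : (T : Set F).Nonempty := by
    obtain ⟨z, hz, hzc⟩ := A.exists_mem_eq_sup' hA fun z => ‖z - c‖
    exact ⟨z, Finset.mem_filter.2 ⟨hz, hzc.symm⟩⟩
  obtain ⟨p, hpT, hp⟩ := exists_forall_norm_sub_add_smul_lt (convex_convexHull ℝ _)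
    (T.finite_toSet.isCompact_convexHull (𝕜 := ℝ)).isComplete hT.convexHull hc
  have hpK : p ∈ K := convexHull_mono (Finset.filter_subset _ A) hpT
  have hclose : ∀ z ∈ A, ∀ᶠ t in 𝓝[>] (0 : ℝ), ‖z - (c + t • (p - c))‖ < G c := by
    intro z hz
    by_cases hzT : z ∈ T
    · filter_upwards [Ioo_mem_nhdsGT (zero_lt_two' ℝ)] with t ht
      exact (Finset.mem_filter.1 hzT).2 ▸ hp z (subset_convexHull ℝ _ hzT) t ht
    · have hlt : ‖z - c‖ < G c :=
        (hle z hz).lt_of_ne fun h => hzT (Finset.mem_filter.2 ⟨hz, h⟩)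
      refine nhdsWithin_le_nhds (ContinuousAt.eventually_lt (by fun_prop) continuousAt_const ?_)
      simpa using hlt
  obtain ⟨t, ht, htK⟩ := ((Filter.eventually_all_finset A).2 hclose).and
    (Ioc_mem_nhdsGT zero_lt_one) |>.exists
  have := hcmin (convex_convexHull ℝ _ |>.add_smul_sub_mem hcK hpK (Set.Ioc_subset_Icc_self htK))
  exact this.not_gt ((Finset.sup'_lt_iff hA).2 ht)

theorem exists_forall_norm_sub_le_mul {s : Finset ι} {x : ι → E} {y : ι → F} {L r : ℝ}
    (hL : 0 ≤ L) (hxy : ∀ i ∈ s, ∀ j ∈ s, ‖y i - y j‖ ≤ L * ‖x i - x j‖) {p : E}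
    (hp : ∀ i ∈ s, ‖x i - p‖ ≤ r) : ∃ q, ∀ i ∈ s, ‖y i - q‖ ≤ L * r := by
  classical
  rcases s.eq_empty_or_nonempty with rfl | ⟨i₀, hi₀⟩
  · exact ⟨0, by simp⟩
  obtain ⟨c, R, hR, hc⟩ :=
    exists_center_mem_convexHull_farthest (s.image y) ⟨y i₀, Finset.mem_image_of_mem y hi₀⟩
  set T := (s.image y).filter fun z => ‖z - c‖ = R
  obtain ⟨w, hw₀, hw₁, hwc⟩ := Finset.mem_convexHull'.1 hc
  have : Nonempty ι := ⟨i₀⟩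
  set g := Function.invFunOn y s
  have hg (z) (hz : z ∈ T) : g z ∈ s ∧ y (g z) = z := by
    refine Function.invFunOn_pos ?_
    simpa using (Finset.mem_filter.1 hz).1
  have hspread : 2 * R ^ 2 ≤ L ^ 2 * (2 * r ^ 2) := calc
    2 * R ^ 2 = weightedSpread T w id :=
      (weightedSpread_eq_of_sum_smul_eq hw₁ hwc fun z hz => (Finset.mem_filter.1 hz).2).symm
    _ ≤ L ^ 2 * weightedSpread T w (x ∘ g) := weightedSpread_le_mul_sq hw₀ fun z hz z' hz' => by
      simpa only [id, Function.comp_apply, (hg z hz).2, (hg z' hz').2] using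
        hxy _ (hg z hz).1 _ (hg z' hz').1
    _ ≤ L ^ 2 * (2 * r ^ 2) := mul_le_mul_of_nonneg_left
      (weightedSpread_le hw₀ hw₁ fun z hz => hp _ (hg z hz).1) (sq_nonneg L)
  have hRsq : R ^ 2 ≤ (L * r) ^ 2 := by linarith
  have hRL : R ≤ L * r := by
    refine (pow_le_pow_iff_left₀ ?_ ?_ two_ne_zero).1 hRsq
    · exact (norm_nonneg _).trans (hR _ (Finset.mem_image_of_mem y hi₀))
    · exact mul_nonneg hL ((norm_nonneg _).trans (hp i₀ hi₀))
  exact ⟨c, fun i hi => (hR _ (Finset.mem_image_of_mem y hi)).trans hRL⟩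

end EnclosingBall

section encRadius

variable {d : ℕ}

theorem encRadius_nonneg (S : Set (EuclideanSpace ℝ (Fin d))) : 0 ≤ encRadius S :=
  Real.iInf_nonneg fun _ => Real.iSup_nonneg fun _ => Real.iSup_nonneg fun _ => dist_nonneg

theorem encRadius_le {S : Set (EuclideanSpace ℝ (Fin d))} {c : EuclideanSpace ℝ (Fin d)} {r : ℝ}
    (hr : 0 ≤ r) (hc : ∀ x ∈ S, dist x c ≤ r) : encRadius S ≤ r := by
  refine (ciInf_le ⟨0, ?_⟩ c).trans (Real.iSup_le (fun x => Real.iSup_le (hc x) hr) hr)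
  rintro _ ⟨c', rfl⟩
  exact Real.iSup_nonneg fun _ => Real.iSup_nonneg fun _ => dist_nonneg

theorem exists_forall_dist_le_of_encRadius_lt {S : Set (EuclideanSpace ℝ (Fin d))}
    (hS : S.Finite) {r : ℝ} (h : encRadius S < r) :
    ∃ c, ∀ x ∈ S, dist x c ≤ r := by
  obtain ⟨c, hc⟩ := exists_lt_of_ciInf_lt h
  have hbdd : BddAbove (⋃ x, Set.range fun _ : x ∈ S => dist x c) :=
    (hS.image fun x => dist x c).bddAbove.mono <| by
      rintro _ ⟨_, ⟨x, rfl⟩, ⟨hx, rfl⟩⟩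
      exact ⟨x, hx, rfl⟩
  exact ⟨c, fun x hx => (le_ciSup₂ hbdd x hx).trans hc.le⟩

theorem encRadius_image_le_mul {ι : Type*} {m : ℕ} {s : Set ι} (hs : s.Finite)
    {x : ι → EuclideanSpace ℝ (Fin d)} {y : ι → EuclideanSpace ℝ (Fin m)} {L : ℝ} (hL : 0 ≤ L)
    (hxy : ∀ i ∈ s, ∀ j ∈ s, ‖y i - y j‖ ≤ L * ‖x i - x j‖) :
    encRadius (y '' s) ≤ L * encRadius (x '' s) := by
  have hlt : ∀ r > encRadius (x '' s), encRadius (y '' s) ≤ L * r := by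
    intro r hr
    obtain ⟨p, hp⟩ := exists_forall_dist_le_of_encRadius_lt (hs.image x) hr
    obtain ⟨q, hq⟩ := exists_forall_norm_sub_le_mul (s := hs.toFinset) hL
      (by simpa only [Set.Finite.mem_toFinset] using hxy) (p := p) fun i hi =>
        dist_eq_norm (x i) p ▸ hp _ (Set.mem_image_of_mem x (hs.mem_toFinset.1 hi))
    refine encRadius_le (c := q) (mul_nonneg hL ((encRadius_nonneg _).trans hr.le)) ?_
    rintro _ ⟨i, hi, rfl⟩
    exact dist_eq_norm (y i) q ▸ hq i (hs.mem_toFinset.2 hi)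
  exact ge_of_tendsto ((continuous_const_mul L).continuousWithinAt (s := Set.Ioi _))
    (eventually_nhdsWithin_of_forall hlt)

end encRadius

/-- JL-type distance preservation implies preservation of smallest enclosing ball radii. -/
theorem stmt_3 {d m : ℕ} (S : Set (EuclideanSpace ℝ (Fin d))) (hS : S.Finite)
    (ε : ℝ) (hε0 : 0 ≤ ε) (hε1 : ε < 1)
    (f : EuclideanSpace ℝ (Fin d) → EuclideanSpace ℝ (Fin m))
    (hf : ∀ x ∈ S, ∀ y ∈ S,
      (1 - ε) * ‖x - y‖ ≤ ‖f x - f y‖ ∧ ‖f x - f y‖ ≤ (1 + ε) * ‖x - y‖) :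
    (1 - ε) * encRadius S ≤ encRadius (f '' S) ∧
      encRadius (f '' S) ≤ (1 + ε) * encRadius S := by
  have hpos : 0 < 1 - ε := sub_pos.2 hε1
  have hlower : encRadius (id '' S) ≤ (1 - ε)⁻¹ * encRadius (f '' S) :=
    encRadius_image_le_mul hS (inv_nonneg.2 hpos.le) fun x hx y hy =>
      (le_inv_mul_iff₀ hpos).2 (hf x hx y hy).1
  have hupper : encRadius (f '' S) ≤ (1 + ε) * encRadius (id '' S) :=
    encRadius_image_le_mul hS (by linarith) fun x hx y hy => (hf x hx y hy).2
  rw [Set.image_id] at hlower hupper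
  exact ⟨(le_inv_mul_iff₀ hpos).1 hlower, hupper⟩
end

section
/- Assuming Slepian's inequality P{max_i X_i ≤ t} ≤ P{max_i Y_i ≤ t} for the Gaussian processes X_i = ⟨x_i, g⟩ and Y_i = ⟨y_i, g⟩ whenever ‖x_i − x_j‖ ≥ ‖y_i − y_j‖ for all i<j, it follows that if both smallest enclosing balls are centered at the origin, then ρ({x_1,...,x_k}) ≥ ρ({y_1,...,y_k}). -/
/-!
Suppose R < R' and pick j with ‖y j‖ = R'. Since ⟨v, g⟩ has the law of ‖v‖ Z for a standard
normal Z, Slepian's inequality followed by a union bound over the events ⟨x i, g⟩ > t gives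
P (R' Z > t) ≤ P (max_i ⟨y i, g⟩ > t) ≤ P (max_i ⟨x i, g⟩ > t) ≤ k P (R Z > t) for every t ≥ 0.
Gaussian tails decay like exp (-t² / 2σ²), so for large t the left side wins: a contradiction.
-/

open MeasureTheory ProbabilityTheory Metric

noncomputable def stdGaussian (d : ℕ) : Measure (EuclideanSpace ℝ (Fin d)) :=
  Measure.map (MeasurableEquiv.toLp 2 (Fin d → ℝ))
    (Measure.pi fun _ : Fin d => gaussianReal 0 1)

open scoped ENNReal NNReal RealInnerProductSpace
open Real Set Filter

lemma setOf_lt_mul_subset {a b t : ℝ} (ha : 0 ≤ a) (hab : a ≤ b) (ht : 0 ≤ t) :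
    {z : ℝ | t < a * z} ⊆ {z | t < b * z} := by
  intro z hz
  have hz0 : 0 < z := pos_of_mul_pos_right (ht.trans_lt hz) ha
  exact hz.trans_le (mul_le_mul_of_nonneg_right hab hz0.le)

lemma setOf_lt_mul_eq_Ioi {a : ℝ} (ha : 0 < a) (t : ℝ) : {z : ℝ | t < a * z} = Ioi (t / a) := by
  ext z
  simp [div_lt_iff₀' ha]

lemma gaussianReal_Ici_le_exp (a : ℝ) (ha : 0 ≤ a) :
    gaussianReal 0 1 (Ici a) ≤ ENNReal.ofReal (exp (-a ^ 2 / 2)) := by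
  have h := measure_ge_le_exp_mul_mgf (μ := gaussianReal 0 1) (X := id) a ha
    (integrable_exp_mul_gaussianReal a)
  rw [mgf_id_gaussianReal, ← exp_add] at h
  rw [← ofReal_measureReal]
  refine ENNReal.ofReal_le_ofReal (h.trans_eq ?_)
  congr 1
  push_cast
  ring

lemma gaussianPDFReal_le_gaussianReal_Ioi (a : ℝ) (ha : 0 ≤ a) :
    ENNReal.ofReal (gaussianPDFReal 0 1 (a + 1)) ≤ gaussianReal 0 1 (Ioi a) := by
  rw [gaussianReal_apply 0 one_ne_zero]
  calc ENNReal.ofReal (gaussianPDFReal 0 1 (a + 1))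
      = ∫⁻ _ in Ioc a (a + 1), ENNReal.ofReal (gaussianPDFReal 0 1 (a + 1)) := by simp
    _ ≤ ∫⁻ x in Ioc a (a + 1), gaussianPDF 0 1 x := by
        refine setLIntegral_mono (measurable_gaussianPDF 0 1) fun x hx => ?_
        refine ENNReal.ofReal_le_ofReal ?_
        simp only [gaussianPDFReal, NNReal.coe_one, mul_one, sub_zero]
        gcongr <;> linarith [hx.1, hx.2]
    _ ≤ ∫⁻ x in Ioi a, gaussianPDF 0 1 x := lintegral_mono_set Ioc_subset_Ioi_self

lemma exists_mul_exp_lt_gaussianPDFReal (K : ℝ) {c : ℝ} (hc : 1 < c) :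
    ∃ s ≥ 0, K * exp (-(c * s) ^ 2 / 2) < gaussianPDFReal 0 1 (s + 1) := by
  have hε : 0 < c ^ 2 - 1 := by nlinarith
  -- `((c s) ^ 2 - (s + 1) ^ 2) / 2`, the exponent of the ratio of the two sides
  have hlim : Tendsto (fun s : ℝ => (s * ((c ^ 2 - 1) * s - 2) - 1) / 2) atTop atTop :=
    (tendsto_atTop_add_const_right _ _ (tendsto_id.atTop_mul_atTop₀
      (tendsto_atTop_add_const_right _ _ (tendsto_id.const_mul_atTop hε)))).atTop_div_const two_pos
  obtain ⟨s, hs, hsK⟩ := ((eventually_ge_atTop 0).and (hlim.eventually_gt_atTop (K * √(2 * π)))).exists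
  refine ⟨s, hs, ?_⟩
  have hexp : K * √(2 * π) < exp ((c * s) ^ 2 / 2 - (s + 1) ^ 2 / 2) := by
    calc K * √(2 * π) < (s * ((c ^ 2 - 1) * s - 2) - 1) / 2 := hsK
      _ < _ := by
        refine (lt_add_one _).trans_le ((add_one_le_exp _).trans_eq' ?_)
        ring_nf
  have hpos : 0 < (√(2 * π))⁻¹ * exp (-(c * s) ^ 2 / 2) := by positivity
  calc K * exp (-(c * s) ^ 2 / 2) = K * √(2 * π) * ((√(2 * π))⁻¹ * exp (-(c * s) ^ 2 / 2)) := by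
        field_simp
    _ < exp ((c * s) ^ 2 / 2 - (s + 1) ^ 2 / 2) * ((√(2 * π))⁻¹ * exp (-(c * s) ^ 2 / 2)) :=
        mul_lt_mul_of_pos_right hexp hpos
    _ = gaussianPDFReal 0 1 (s + 1) := by
        rw [gaussianPDFReal, mul_left_comm, ← exp_add]
        congr 2
        · simp
        · push_cast; ring

theorem exists_natCast_mul_gaussianReal_lt (n : ℕ) {σ τ : ℝ} (hσ : 0 ≤ σ) (hστ : σ < τ) :
    ∃ t ≥ 0, n * gaussianReal 0 1 {z | t < σ * z} < gaussianReal 0 1 {z | t < τ * z} := by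
  -- Passing through the tail of ρ Z with ρ > 0 lets the Chernoff bound also cover σ = 0.
  set ρ := (σ + τ) / 2 with hρ_def
  have hσρ : σ ≤ ρ := by linarith
  have hρτ : ρ < τ := by linarith
  have hρ : 0 < ρ := hσ.trans_lt (by linarith)
  have hτ : 0 < τ := hρ.trans hρτ
  obtain ⟨s, hs, hlt⟩ := exists_mul_exp_lt_gaussianPDFReal n ((one_lt_div hρ).2 hρτ)
  refine ⟨τ * s, by positivity, ?_⟩
  have hts : τ * s / ρ = τ / ρ * s := by ring
  calc (n : ℝ≥0∞) * gaussianReal 0 1 {z | τ * s < σ * z}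
      ≤ n * gaussianReal 0 1 (Ioi (τ / ρ * s)) := by
        rw [← hts, ← setOf_lt_mul_eq_Ioi hρ]
        gcongr n * ?_
        exact measure_mono (setOf_lt_mul_subset hσ hσρ (by positivity))
    _ ≤ n * ENNReal.ofReal (exp (-(τ / ρ * s) ^ 2 / 2)) := by
        gcongr
        exact (measure_mono Ioi_subset_Ici_self).trans (gaussianReal_Ici_le_exp _ (by positivity))
    _ < ENNReal.ofReal (gaussianPDFReal 0 1 (s + 1)) := by
        rw [← ENNReal.ofReal_natCast, ← ENNReal.ofReal_mul n.cast_nonneg]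
        exact (ENNReal.ofReal_lt_ofReal_iff (gaussianPDFReal_pos _ _ _ one_ne_zero)).2 hlt
    _ ≤ gaussianReal 0 1 {z | τ * s < τ * z} := by
        rw [setOf_lt_mul_eq_Ioi hτ, mul_div_cancel_left₀ s hτ.ne']
        exact gaussianPDFReal_le_gaussianReal_Ioi s hs

lemma stdGaussian_eq_stdGaussian (d : ℕ) :
    _root_.stdGaussian d = ProbabilityTheory.stdGaussian (EuclideanSpace ℝ (Fin d)) :=
  map_pi_eq_stdGaussian

lemma stdGaussian_map_inner {E : Type*} [NormedAddCommGroup E] [InnerProductSpace ℝ E]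
    [FiniteDimensional ℝ E] [MeasurableSpace E] [BorelSpace E] (v : E) :
    (ProbabilityTheory.stdGaussian E).map (fun g => ⟪v, g⟫) = (gaussianReal 0 1).map (‖v‖ * ·) := by
  have h := IsGaussian.map_eq_gaussianReal (μ := ProbabilityTheory.stdGaussian E) (innerSL ℝ v)
  rw [integral_strongDual_stdGaussian, variance_dual_stdGaussian, innerSL_apply_norm] at h
  rw [gaussianReal_map_const_mul, mul_zero, mul_one, ← Real.toNNReal_of_nonneg (sq_nonneg _)]
  exact h

lemma stdGaussian_setOf_lt_inner {E : Type*} [NormedAddCommGroup E] [InnerProductSpace ℝ E]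
    [FiniteDimensional ℝ E] [MeasurableSpace E] [BorelSpace E] (v : E) (t : ℝ) :
    ProbabilityTheory.stdGaussian E {g | t < ⟪v, g⟫} = gaussianReal 0 1 {z | t < ‖v‖ * z} := by
  have h := congrArg (· (Ioi t)) (stdGaussian_map_inner v)
  rwa [Measure.map_apply (by fun_prop) measurableSet_Ioi,
    Measure.map_apply (by fun_prop) measurableSet_Ioi] at h

lemma measure_lt_le_sum_of_measure_forall_le {Ω ι : Type*} [MeasurableSpace Ω] {μ : Measure Ω}
    [IsProbabilityMeasure μ] [Fintype ι] {X Y : ι → Ω → ℝ} (hX : ∀ i, Measurable (X i))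
    (hY : ∀ i, Measurable (Y i)) {t : ℝ}
    (h : μ {ω | ∀ i, X i ω ≤ t} ≤ μ {ω | ∀ i, Y i ω ≤ t}) (j : ι) :
    μ {ω | t < Y j ω} ≤ ∑ i, μ {ω | t < X i ω} := by
  have hmeas : ∀ Z : ι → Ω → ℝ, (∀ i, Measurable (Z i)) → MeasurableSet {ω | ∀ i, Z i ω ≤ t} :=
    fun Z hZ => by
      simp_rw [ofPred_forall]
      exact .iInter fun i => measurableSet_le (hZ i) measurable_const
  calc μ {ω | t < Y j ω} ≤ μ {ω | ∀ i, Y i ω ≤ t}ᶜ :=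
        measure_mono fun ω hω hall => (hall j).not_gt hω
    _ = 1 - μ {ω | ∀ i, Y i ω ≤ t} := prob_compl_eq_one_sub (hmeas Y hY)
    _ ≤ 1 - μ {ω | ∀ i, X i ω ≤ t} := tsub_le_tsub_left h 1
    _ = μ (⋃ i, {ω | t < X i ω}) := by
        rw [← prob_compl_eq_one_sub (hmeas X hX)]
        congr 1
        ext ω
        simp
    _ ≤ ∑ i, μ {ω | t < X i ω} := measure_iUnion_fintype_le _ _

theorem stmt_14_general {d k : ℕ}
    (x y : Fin k → EuclideanSpace ℝ (Fin d))
    (R R' : ℝ)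
    (hR : IsGreatest (Set.range fun i => ‖x i‖) R)
    (hR' : IsGreatest (Set.range fun i => ‖y i‖) R')
    (hslepian : ∀ t : ℝ,
      stdGaussian d {g | ∀ i, (inner ℝ (x i) g : ℝ) ≤ t} ≤
        stdGaussian d {g | ∀ i, (inner ℝ (y i) g : ℝ) ≤ t}) :
    R' ≤ R := by
  by_contra! hlt
  obtain ⟨j, hj : ‖y j‖ = R'⟩ := hR'.1
  have hR0 : 0 ≤ R := by
    obtain ⟨i, hi⟩ := hR.1
    exact hi ▸ norm_nonneg _
  obtain ⟨t, ht, hcmp⟩ := exists_natCast_mul_gaussianReal_lt k hR0 hlt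
  simp_rw [stdGaussian_eq_stdGaussian] at hslepian
  refine hcmp.not_ge ?_
  calc gaussianReal 0 1 {z | t < R' * z} = ProbabilityTheory.stdGaussian _ {g | t < ⟪y j, g⟫} := by
        rw [stdGaussian_setOf_lt_inner, hj]
    _ ≤ ∑ i, ProbabilityTheory.stdGaussian _ {g | t < ⟪x i, g⟫} :=
        measure_lt_le_sum_of_measure_forall_le (fun i => by fun_prop) (fun i => by fun_prop)
          (hslepian t) j
    _ ≤ ∑ _i : Fin k, gaussianReal 0 1 {z | t < R * z} := by
        gcongr with i
        rw [stdGaussian_setOf_lt_inner]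
        exact measure_mono (setOf_lt_mul_subset (norm_nonneg _) (hR.2 ⟨i, rfl⟩) ht)
    _ = k * gaussianReal 0 1 {z | t < R * z} := by simp

/-- Assuming Slepian'\''s inequality for the processes ⟨xᵢ,g⟩ and ⟨yᵢ,g⟩, if the pairwise
distances of the xᵢ dominate those of the yᵢ and both smallest enclosing balls are
centered at the origin, then R = max‖xᵢ‖ dominates R'\'' = max‖yᵢ‖. -/
theorem stmt_14 {d k : ℕ} (hk : 0 < k)
    (x y : Fin k → EuclideanSpace ℝ (Fin d))
    (hdist : ∀ i j : Fin k, i < j → ‖y i - y j‖ ≤ ‖x i - x j‖)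
    (R R' : ℝ)
    (hR : IsGreatest (Set.range fun i => ‖x i‖) R)
    (hR' : IsGreatest (Set.range fun i => ‖y i‖) R')
    (hRpos : 0 < R) (hR'pos : 0 < R')
    (hslepian : ∀ t : ℝ,
      stdGaussian d {g | ∀ i, (inner ℝ (x i) g : ℝ) ≤ t} ≤
        stdGaussian d {g | ∀ i, (inner ℝ (y i) g : ℝ) ≤ t}) :
    R' ≤ R :=
  stmt_14_general x y R R' hR hR' hslepian
end

section
/- The Vietoris–Rips and Čech complexes of a finite point set X ⊂ R^d satisfy Č_α(X) ⊆ V_α(X) ⊆ Č_{√2 α}(X) for all α ≥ 0, where a simplex σ belongs to Č_α(X) iff the points of σ lie in a common closed ball of radius α, and to V_α(X) iff all pairwise distances in σ are at most 2α. -/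
/-!
The first inclusion is the triangle inequality. For the second (weak Jung), let `c` minimise the
distance `r` from a point to the farthest point of `σ`, and let `x` be a farthest point. If every
farthest point `y` had `⟪x - c, y - c⟫ > 0`, moving `c` slightly towards `x` would decrease `r`.
So some farthest `y` has `⟪x - c, y - c⟫ ≤ 0`, whence `2 r² ≤ ‖x - y‖² ≤ (2α)²`.
-/

open Filter Topology

section ChebyshevCenter

variable {E : Type*}

theorem Finset.continuous_sup'_dist [PseudoMetricSpace E] (s : Finset E) (hs : s.Nonempty) :
    Continuous fun c => s.sup' hs (dist · c) :=
  Continuous.finset_sup'_apply hs fun _ _ => continuous_const.dist continuous_id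

theorem Finset.exists_forall_sup'_dist_le [PseudoMetricSpace E] [ProperSpace E] (s : Finset E)
    (hs : s.Nonempty) : ∃ c, ∀ c', s.sup' hs (dist · c) ≤ s.sup' hs (dist · c') := by
  obtain ⟨p, hp⟩ := hs
  have : Nonempty E := ⟨p⟩
  refine (s.continuous_sup'_dist ⟨p, hp⟩).exists_forall_le ?_
  exact tendsto_atTop_mono (fun c => s.le_sup' (dist · c) hp) (tendsto_dist_left_cocompact_atTop p)

end ChebyshevCenter

section Jung

variable {E : Type*} [NormedAddCommGroup E] [InnerProductSpace ℝ E]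

open RealInnerProductSpace

theorem dist_add_smul_sq (x y c : E) (t : ℝ) :
    dist y (c + t • (x - c)) ^ 2 = dist y c ^ 2 - t * (2 * ⟪x - c, y - c⟫ - t * ‖x - c‖ ^ 2) := by
  rw [dist_eq_norm, dist_eq_norm, show y - (c + t • (x - c)) = (y - c) - t • (x - c) by abel,
    norm_sub_sq_real, real_inner_smul_right, real_inner_comm, norm_smul, mul_pow,
    Real.norm_eq_abs, sq_abs]
  ring

theorem eventually_dist_add_smul_lt {x y c : E} {r : ℝ} (hy : dist y c ≤ r)
    (h : dist y c < r ∨ 0 < ⟪x - c, y - c⟫) :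
    ∀ᶠ t in 𝓝[>] (0 : ℝ), dist y (c + t • (x - c)) < r := by
  set g : ℝ → ℝ := fun t => t * (2 * ⟪x - c, y - c⟫ - t * ‖x - c‖ ^ 2)
  have hg : Continuous g := by fun_prop
  suffices ∀ᶠ t in 𝓝[>] (0 : ℝ), dist y c ^ 2 - g t < r ^ 2 by
    filter_upwards [this] with t ht
    rw [← dist_add_smul_sq] at ht
    exact lt_of_pow_lt_pow_left₀ 2 (dist_nonneg.trans hy) ht
  rcases h with hlt | hpos
  · have hsq : dist y c ^ 2 - r ^ 2 < g 0 := by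
      simp only [g, zero_mul]
      nlinarith [dist_nonneg (x := y) (y := c)]
    filter_upwards [nhdsWithin_le_nhds ((hg.tendsto 0).eventually_const_lt hsq)] with t ht
    linarith
  · have hlim : Tendsto (fun t => 2 * ⟪x - c, y - c⟫ - t * ‖x - c‖ ^ 2) (𝓝 0)
        (𝓝 (2 * ⟪x - c, y - c⟫)) :=
      Continuous.tendsto' (by fun_prop) 0 _ (by simp)
    filter_upwards [nhdsWithin_le_nhds (hlim.eventually_const_lt (by linarith : (0:ℝ) < _)),
      self_mem_nhdsWithin] with t ht (htpos : 0 < t)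
    have : 0 < g t := mul_pos htpos ht
    nlinarith [pow_le_pow_left₀ dist_nonneg hy 2]

/-- Otherwise moving the Chebyshev center `c` slightly towards `x` would decrease the distance to
the farthest point of `s`. -/
theorem Finset.exists_farthest_inner_nonpos {s : Finset E} (hs : s.Nonempty) {c : E}
    (hc : ∀ c', s.sup' hs (dist · c) ≤ s.sup' hs (dist · c')) (x : E) :
    ∃ y ∈ s, dist y c = s.sup' hs (dist · c) ∧ ⟪x - c, y - c⟫ ≤ 0 := by
  by_contra! hfar
  have hmove : ∀ᶠ t in 𝓝[>] (0 : ℝ), ∀ y ∈ s, dist y (c + t • (x - c)) < s.sup' hs (dist · c) := by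
    refine (s.eventually_all).2 fun y hy => eventually_dist_add_smul_lt (s.le_sup' (dist · c) hy) ?_
    rcases (s.le_sup' (dist · c) hy).lt_or_eq with hlt | heq
    · exact .inl hlt
    · exact .inr (hfar y hy heq)
  obtain ⟨t, ht⟩ := hmove.exists
  exact (hc _).not_gt ((s.sup'_lt_iff hs).2 ht)

theorem Finset.exists_dist_le_sqrt_two_mul [ProperSpace E] (s : Finset E) {α : ℝ}
    (h : ∀ x ∈ s, ∀ y ∈ s, dist x y ≤ 2 * α) : ∃ c, ∀ x ∈ s, dist x c ≤ √2 * α := by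
  rcases s.eq_empty_or_nonempty with rfl | hs
  · exact ⟨0, by simp⟩
  obtain ⟨c, hc⟩ := s.exists_forall_sup'_dist_le hs
  set r := s.sup' hs (dist · c)
  obtain ⟨x, hx, hxr⟩ := s.exists_mem_eq_sup' hs (dist · c)
  obtain ⟨y, hy, hyr, hinner⟩ := s.exists_farthest_inner_nonpos hs hc x
  have hα : 0 ≤ α := by linarith [h x hx x hx, dist_self x]
  have hxy : 2 * r ^ 2 ≤ dist x y ^ 2 := by
    have : dist x y ^ 2 = dist x c ^ 2 - 2 * ⟪x - c, y - c⟫ + dist y c ^ 2 := by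
      rw [dist_eq_norm, dist_eq_norm, dist_eq_norm, ← norm_sub_sq_real, sub_sub_sub_cancel_right]
    rw [this, ← hxr, hyr]
    linarith
  have hr : r ≤ √2 * α := by
    refine le_of_pow_le_pow_left₀ two_ne_zero (by positivity) ?_
    rw [mul_pow, Real.sq_sqrt zero_le_two]
    nlinarith [h x hx y hy, dist_nonneg (x := x) (y := y)]
  exact ⟨c, fun z hz => (s.le_sup' (dist · c) hz).trans hr⟩

end Jung

theorem stmt_17_general {d : ℕ} (X : Set (EuclideanSpace ℝ (Fin d))) (hX : X.Finite)
    (α : ℝ) :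
    ∀ σ ⊆ X,
      ((∃ c : EuclideanSpace ℝ (Fin d), ∀ x ∈ σ, dist x c ≤ α) →
        ∀ x ∈ σ, ∀ y ∈ σ, dist x y ≤ 2 * α) ∧
      ((∀ x ∈ σ, ∀ y ∈ σ, dist x y ≤ 2 * α) →
        ∃ c : EuclideanSpace ℝ (Fin d), ∀ x ∈ σ, dist x c ≤ Real.sqrt 2 * α) := by
  intro σ hσX
  refine ⟨fun ⟨c, hc⟩ x hx y hy => ?_, fun h => ?_⟩
  · linarith [dist_triangle_right x y c, hc x hx, hc y hy]
  · have hσ : σ.Finite := hX.subset hσX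
    obtain ⟨c, hc⟩ := hσ.toFinset.exists_dist_le_sqrt_two_mul (by simpa using h)
    exact ⟨c, by simpa using hc⟩

/-- Čech–Vietoris-Rips interleaving: Č_α(X) ⊆ V_α(X) ⊆ Č_{√2·α}(X).  A simplex σ is
in Č_α(X) iff σ lies in a common closed ball of radius α, and in V_α(X) iff all
pairwise distances in σ are at most 2α. -/
theorem stmt_17 {d : ℕ} (X : Set (EuclideanSpace ℝ (Fin d))) (hX : X.Finite)
    (α : ℝ) (hα : 0 ≤ α) :
    ∀ σ ⊆ X,
      ((∃ c : EuclideanSpace ℝ (Fin d), ∀ x ∈ σ, dist x c ≤ α) →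
        ∀ x ∈ σ, ∀ y ∈ σ, dist x y ≤ 2 * α) ∧
      ((∀ x ∈ σ, ∀ y ∈ σ, dist x y ≤ 2 * α) →
        ∃ c : EuclideanSpace ℝ (Fin d), ∀ x ∈ σ, dist x c ≤ Real.sqrt 2 * α) :=
  stmt_17_general X hX α
end

section
/- The power distance version of the enclosing ball stability: if f preserves Euclidean distances on S up to factors (1±ε) and preserves weights (w(f(x)) = w(x)), then the weighted smallest enclosing ball radius ρ_w(S) = min_p max_{x∈S} √(‖p−x‖² + w(x)²) satisfies (1−ε)ρ_w(S) ≤ ρ_w(f(S)) ≤ (1+ε)ρ_w(S). -/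
/-- The weighted (power-distance) smallest enclosing ball radius of a finite set S. -/
noncomputable def powerRadius {d : ℕ} (S : Set (EuclideanSpace ℝ (Fin d)))
    (w : EuclideanSpace ℝ (Fin d) → ℝ) : ℝ :=
  ⨅ p : EuclideanSpace ℝ (Fin d), ⨆ x ∈ S, Real.sqrt (dist p x ^ 2 + w x ^ 2)

/-!
Squared, `ρ_w(S)` is the optimum of a concave quadratic program over the standard simplex on `S`,
with objective `G(l) = ∑ l x (‖x‖² + w(x)²) - ‖∑ l x • x‖²` (`powerDual`). Averaging `d_x(p)²`
with the weights `l` gives `G(l) ≤ max_x d_x(p)²` for every centre `p`; conversely, at a maximiser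
`l` of `G`, the first-order condition along the segments towards the vertices of the simplex says
that the barycentre `∑ l x • x` is a centre with `max_x d_x(·)² ≤ G(l)`. As
`G(l) = ½ ∑ l x l y ‖x - y‖² + ∑ l x w(x)²` only sees pairwise distances and weights, a map
expanding distances by at most `c ≥ 1` multiplies it, and hence `ρ_w²`, by at most `c²`. This
gives the upper bound with `c = 1 + ε`, and the lower bound is the same estimate for the inverse
of `f` on `f(S)`, with `c = (1 - ε)⁻¹`.
-/

open Finset
open scoped RealInnerProductSpace

section PowerDual

variable {E : Type*} [NormedAddCommGroup E] [InnerProductSpace ℝ E]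
variable {ι : Type*} [Fintype ι]

theorem sum_mul_norm_sub_sq (u : ι → E) {l : ι → ℝ} (hl : ∑ i, l i = 1) (p : E) :
    ∑ i, l i * ‖p - u i‖ ^ 2 =
      ∑ i, l i * ‖u i‖ ^ 2 - ‖∑ i, l i • u i‖ ^ 2 + ‖p - ∑ i, l i • u i‖ ^ 2 := by
  have hinner : ⟪p, ∑ i, l i • u i⟫ = ∑ i, l i * ⟪p, u i⟫ := by
    simp only [inner_sum, real_inner_smul_right]
  have hsum : ∑ i, l i * ‖p - u i‖ ^ 2 =
      ∑ i, l i * ‖u i‖ ^ 2 + (∑ i, l i) * ‖p‖ ^ 2 - 2 * ∑ i, l i * ⟪p, u i⟫ := by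
    simp only [norm_sub_sq_real, sum_mul, mul_sum, ← sum_add_distrib, ← sum_sub_distrib]
    exact sum_congr rfl fun i _ => by ring
  rw [hsum, hl, ← hinner, norm_sub_sq_real]
  ring

theorem sum_add_smul_single_sub_smul {M : Type*} [AddCommGroup M] [Module ℝ M] [DecidableEq ι]
    (g : ι → M) (l : ι → ℝ) (i : ι) (t : ℝ) :
    ∑ j, (l + t • (Pi.single i 1 - l) : ι → ℝ) j • g j =
      ∑ j, l j • g j + t • (g i - ∑ j, l j • g j) := by
  simp [add_smul, sub_smul, smul_sub, sum_add_distrib, sum_sub_distrib, smul_sum, mul_smul,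
    Pi.single_apply, ite_smul]

theorem nonpos_of_forall_mul_le_sq {A C : ℝ} (h : ∀ t ∈ Set.Ioc (0 : ℝ) 1, t * A ≤ t ^ 2 * C) :
    A ≤ 0 := by
  have hlim : Filter.Tendsto (fun t : ℝ => t * C) (nhdsWithin 0 (Set.Ioi 0)) (nhds 0) := by
    simpa using ((continuous_mul_const C).tendsto 0).mono_left nhdsWithin_le_nhds
  refine ge_of_tendsto hlim ?_
  filter_upwards [Ioc_mem_nhdsGT zero_lt_one] with t ht
  have := h t ht
  rw [sq, mul_assoc] at this
  exact le_of_mul_le_mul_left this ht.1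

noncomputable def powerDual (u : ι → E) (ω l : ι → ℝ) : ℝ :=
  ∑ i, l i * (‖u i‖ ^ 2 + ω i ^ 2) - ‖∑ i, l i • u i‖ ^ 2

theorem powerDual_eq_sub_add_sum (u : ι → E) (ω l : ι → ℝ) :
    powerDual u ω l = ∑ i, l i * ‖u i‖ ^ 2 - ‖∑ i, l i • u i‖ ^ 2 + ∑ i, l i * ω i ^ 2 := by
  simp only [powerDual, mul_add, sum_add_distrib]
  ring

theorem powerDual_add_norm_sub_sq (u : ι → E) (ω : ι → ℝ) {l : ι → ℝ} (hl : ∑ i, l i = 1)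
    (p : E) :
    powerDual u ω l + ‖p - ∑ i, l i • u i‖ ^ 2 = ∑ i, l i * (‖p - u i‖ ^ 2 + ω i ^ 2) := by
  simp only [powerDual_eq_sub_add_sum, mul_add, sum_add_distrib, sum_mul_norm_sub_sq u hl]
  ring

theorem powerDual_eq_sum_sum (u : ι → E) (ω : ι → ℝ) {l : ι → ℝ} (hl : ∑ i, l i = 1) :
    powerDual u ω l = (∑ i, ∑ j, l i * l j * ‖u i - u j‖ ^ 2) / 2 + ∑ i, l i * ω i ^ 2 := by
  set b := ∑ i, l i • u i
  set V := ∑ i, l i * ‖u i‖ ^ 2 - ‖b‖ ^ 2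
  have hsum : ∑ i, ∑ j, l i * l j * ‖u i - u j‖ ^ 2 = 2 * V :=
    calc ∑ i, ∑ j, l i * l j * ‖u i - u j‖ ^ 2
        = ∑ i, l i * (V + ‖u i - b‖ ^ 2) := by
          refine sum_congr rfl fun i _ => ?_
          simp only [mul_assoc, ← mul_sum, sum_mul_norm_sub_sq u hl, V, b]
      _ = V + ∑ i, l i * ‖b - u i‖ ^ 2 := by
          simp only [mul_add, sum_add_distrib, ← sum_mul, hl, one_mul, norm_sub_rev]
      _ = 2 * V := by rw [sum_mul_norm_sub_sq u hl, sub_self, norm_zero]; ring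
  rw [powerDual_eq_sub_add_sum, hsum]
  ring

theorem exists_powerDual_le (u : ι → E) (ω : ι → ℝ) {l : ι → ℝ} (hl : l ∈ stdSimplex ℝ ι)
    (p : E) : ∃ i, powerDual u ω l ≤ ‖p - u i‖ ^ 2 + ω i ^ 2 := by
  obtain ⟨j, -, -⟩ := exists_ne_zero_of_sum_ne_zero (hl.2.symm ▸ one_ne_zero)
  have : Nonempty ι := ⟨j⟩
  obtain ⟨i, hi⟩ := Finite.exists_max fun i => ‖p - u i‖ ^ 2 + ω i ^ 2
  refine ⟨i, ?_⟩
  calc powerDual u ω l ≤ powerDual u ω l + ‖p - ∑ i, l i • u i‖ ^ 2 := by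
        linarith [sq_nonneg ‖p - ∑ i, l i • u i‖]
    _ = ∑ j, l j * (‖p - u j‖ ^ 2 + ω j ^ 2) := powerDual_add_norm_sub_sq u ω hl.2 p
    _ ≤ ∑ j, l j * (‖p - u i‖ ^ 2 + ω i ^ 2) :=
        sum_le_sum fun j _ => mul_le_mul_of_nonneg_left (hi j) (hl.1 j)
    _ = ‖p - u i‖ ^ 2 + ω i ^ 2 := by rw [← sum_mul, hl.2, one_mul]

theorem powerDual_add_smul_single_sub [DecidableEq ι] (u : ι → E) (ω l : ι → ℝ) (i : ι)
    (t : ℝ) :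
    powerDual u ω (l + t • (Pi.single i 1 - l)) =
      powerDual u ω l + t * (‖∑ j, l j • u j - u i‖ ^ 2 + ω i ^ 2 - powerDual u ω l) -
        t ^ 2 * ‖∑ j, l j • u j - u i‖ ^ 2 := by
  set b := ∑ j, l j • u j
  have hsum := sum_add_smul_single_sub_smul (fun j => ‖u j‖ ^ 2 + ω j ^ 2) l i t
  simp only [smul_eq_mul] at hsum
  have hui : ‖u i‖ ^ 2 = ‖b‖ ^ 2 + 2 * ⟪b, u i - b⟫ + ‖u i - b‖ ^ 2 := by
    rw [← norm_add_sq_real, add_sub_cancel]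
  rw [powerDual, powerDual, hsum, sum_add_smul_single_sub_smul u, norm_add_sq_real, norm_smul,
    real_inner_smul_right, mul_pow, Real.norm_eq_abs, sq_abs, norm_sub_rev b, hui]
  ring

theorem IsMaxOn.norm_sub_sq_add_sq_le_powerDual (u : ι → E) (ω : ι → ℝ) {l : ι → ℝ}
    (hl : l ∈ stdSimplex ℝ ι) (hmax : IsMaxOn (powerDual u ω) (stdSimplex ℝ ι) l) (i : ι) :
    ‖∑ j, l j • u j - u i‖ ^ 2 + ω i ^ 2 ≤ powerDual u ω l := by
  classical
  refine sub_nonpos.1 (nonpos_of_forall_mul_le_sq (C := ‖∑ j, l j • u j - u i‖ ^ 2) fun t ht => ?_)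
  have hmem := (convex_stdSimplex ℝ ι).add_smul_sub_mem hl (single_mem_stdSimplex ℝ i)
    (Set.Ioc_subset_Icc_self ht)
  have : powerDual u ω _ ≤ powerDual u ω l := hmax hmem
  rw [powerDual_add_smul_single_sub] at this
  linarith

theorem powerDual_le_mul_sq {F : Type*} [NormedAddCommGroup F] [InnerProductSpace ℝ F]
    (u : ι → E) (v : ι → F) (ω : ι → ℝ) {l : ι → ℝ} (hl : l ∈ stdSimplex ℝ ι) {c : ℝ}
    (hc : 1 ≤ c) (huv : ∀ i j, ‖v i - v j‖ ≤ c * ‖u i - u j‖) :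
    powerDual v ω l ≤ c ^ 2 * powerDual u ω l := by
  have hsq : ∀ i j, ‖v i - v j‖ ^ 2 ≤ c ^ 2 * ‖u i - u j‖ ^ 2 := fun i j => by
    rw [← mul_pow]; exact pow_le_pow_left₀ (norm_nonneg _) (huv i j) 2
  have hpair : ∑ i, ∑ j, l i * l j * ‖v i - v j‖ ^ 2 ≤
      c ^ 2 * ∑ i, ∑ j, l i * l j * ‖u i - u j‖ ^ 2 := by
    simp only [mul_sum]
    exact sum_le_sum fun i _ => sum_le_sum fun j _ => by
      nlinarith [mul_nonneg (hl.1 i) (hl.1 j), hsq i j]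
  have hweight : ∑ i, l i * ω i ^ 2 ≤ c ^ 2 * ∑ i, l i * ω i ^ 2 :=
    le_mul_of_one_le_left (sum_nonneg fun i _ => mul_nonneg (hl.1 i) (sq_nonneg _))
      (one_le_pow₀ hc)
  rw [powerDual_eq_sum_sum u ω hl.2, powerDual_eq_sum_sum v ω hl.2]
  linarith

end PowerDual

section PowerRadius

variable {d : ℕ} {S : Set (EuclideanSpace ℝ (Fin d))} {w : EuclideanSpace ℝ (Fin d) → ℝ}

theorem powerRadius_nonneg : 0 ≤ powerRadius S w :=
  le_ciInf fun _ => Real.iSup_nonneg fun _ => Real.iSup_nonneg fun _ => Real.sqrt_nonneg _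

theorem powerRadius_le_sqrt {a : ℝ} (p : EuclideanSpace ℝ (Fin d))
    (h : ∀ x ∈ S, dist p x ^ 2 + w x ^ 2 ≤ a) : powerRadius S w ≤ √a := by
  have hbdd : BddBelow (Set.range fun q : EuclideanSpace ℝ (Fin d) =>
      ⨆ x ∈ S, √(dist q x ^ 2 + w x ^ 2)) :=
    ⟨0, by
      rintro _ ⟨q, rfl⟩
      exact Real.iSup_nonneg fun _ => Real.iSup_nonneg fun _ => Real.sqrt_nonneg _⟩
  exact (ciInf_le hbdd p).trans <| Real.iSup_le (fun x => Real.iSup_le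
    (fun hx => Real.sqrt_le_sqrt (h x hx)) (Real.sqrt_nonneg a)) (Real.sqrt_nonneg a)

theorem sqrt_le_powerRadius (hS : S.Finite) {a : ℝ}
    (h : ∀ p, ∃ x ∈ S, a ≤ dist p x ^ 2 + w x ^ 2) : √a ≤ powerRadius S w := by
  refine le_ciInf fun p => ?_
  obtain ⟨x, hx, hax⟩ := h p
  have hbdd : BddAbove (⋃ y, Set.range fun (_ : y ∈ S) => √(dist p y ^ 2 + w y ^ 2)) :=
    (hS.image _).bddAbove.mono <| Set.iUnion_subset fun y => Set.range_subset_iff.2 fun hy =>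
      Set.mem_image_of_mem (fun y => √(dist p y ^ 2 + w y ^ 2)) hy
  exact (Real.sqrt_le_sqrt hax).trans (le_ciSup₂ hbdd x hx)

theorem powerRadius_image_le_mul (hS : S.Finite) {m : ℕ}
    {g : EuclideanSpace ℝ (Fin d) → EuclideanSpace ℝ (Fin m)} {w' : EuclideanSpace ℝ (Fin m) → ℝ}
    {c : ℝ} (hc : 1 ≤ c) (hg : ∀ x ∈ S, ∀ y ∈ S, ‖g x - g y‖ ≤ c * ‖x - y‖)
    (hw : ∀ x ∈ S, w' (g x) = w x) :
    powerRadius (g '' S) w' ≤ c * powerRadius S w := by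
  rcases S.eq_empty_or_nonempty with rfl | hne
  · rw [Set.image_empty]
    refine (powerRadius_le_sqrt (a := 0) 0 (by simp)).trans ?_
    rw [Real.sqrt_zero]
    exact mul_nonneg (by linarith) powerRadius_nonneg
  have := hS.fintype
  have := hne.to_subtype
  let u : S → EuclideanSpace ℝ (Fin d) := (↑)
  let v : S → EuclideanSpace ℝ (Fin m) := fun x => g x
  let ω : S → ℝ := fun x => w x
  have hcont : Continuous (powerDual v ω) := by unfold powerDual; fun_prop
  obtain ⟨l, hl, hmax⟩ := (isCompact_stdSimplex ℝ S).exists_isMaxOn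
    ⟨_, single_mem_stdSimplex ℝ (Classical.arbitrary S)⟩ hcont.continuousOn
  calc powerRadius (g '' S) w'
      ≤ √(powerDual v ω l) := by
        refine powerRadius_le_sqrt (∑ j, l j • v j) ?_
        rintro _ ⟨x, hx, rfl⟩
        rw [hw x hx, dist_eq_norm]
        exact hmax.norm_sub_sq_add_sq_le_powerDual v ω hl ⟨x, hx⟩
    _ ≤ √(c ^ 2 * powerDual u ω l) :=
        Real.sqrt_le_sqrt (powerDual_le_mul_sq u v ω hl hc fun x y => hg x x.2 y y.2)
    _ = c * √(powerDual u ω l) := by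
        rw [Real.sqrt_mul (sq_nonneg c), Real.sqrt_sq (by linarith)]
    _ ≤ c * powerRadius S w := by
        refine mul_le_mul_of_nonneg_left (sqrt_le_powerRadius hS fun p => ?_) (by linarith)
        obtain ⟨i, hi⟩ := exists_powerDual_le u ω hl p
        exact ⟨i, i.2, by rwa [dist_eq_norm]⟩

theorem mul_powerRadius_le_image (hS : S.Finite) {m : ℕ}
    {f : EuclideanSpace ℝ (Fin d) → EuclideanSpace ℝ (Fin m)} {w' : EuclideanSpace ℝ (Fin m) → ℝ}
    {a : ℝ} (ha₀ : 0 < a) (ha₁ : a ≤ 1) (hf : ∀ x ∈ S, ∀ y ∈ S, a * ‖x - y‖ ≤ ‖f x - f y‖)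
    (hw : ∀ x ∈ S, w' (f x) = w x) :
    a * powerRadius S w ≤ powerRadius (f '' S) w' := by
  have hinj : Set.InjOn f S := fun x hx y hy hxy => by
    have := hf x hx y hy
    rw [hxy, sub_self, norm_zero] at this
    exact sub_eq_zero.1 (norm_le_zero_iff.1 (nonpos_of_mul_nonpos_right this ha₀))
  set g := Function.invFunOn f S
  have hgf : ∀ z ∈ f '' S, g z ∈ S ∧ f (g z) = z := fun z hz => Function.invFunOn_pos hz
  have hg : ∀ z ∈ f '' S, ∀ z' ∈ f '' S, ‖g z - g z'‖ ≤ a⁻¹ * ‖z - z'‖ := by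
    intro z hz z' hz'
    obtain ⟨hgz, hfgz⟩ := hgf z hz
    obtain ⟨hgz', hfgz'⟩ := hgf z' hz'
    refine (le_inv_mul_iff₀ ha₀).2 ?_
    simpa only [hfgz, hfgz'] using hf _ hgz _ hgz'
  have hwg : ∀ z ∈ f '' S, w (g z) = w' z := fun z hz => by
    obtain ⟨hgz, hfgz⟩ := hgf z hz
    rw [← hw _ hgz, hfgz]
  have := powerRadius_image_le_mul (hS.image f) ((one_le_inv₀ ha₀).2 ha₁) hg hwg
  rw [hinj.invFunOn_image subset_rfl] at this
  exact (le_inv_mul_iff₀ ha₀).1 this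

end PowerRadius

theorem stmt_19_general {d m : ℕ} (S : Set (EuclideanSpace ℝ (Fin d))) (hS : S.Finite)
    (ε : ℝ) (hε0 : 0 ≤ ε) (hε1 : ε < 1)
    (w : EuclideanSpace ℝ (Fin d) → ℝ) (w' : EuclideanSpace ℝ (Fin m) → ℝ)
    (f : EuclideanSpace ℝ (Fin d) → EuclideanSpace ℝ (Fin m))
    (hf : ∀ x ∈ S, ∀ y ∈ S,
      (1 - ε) * ‖x - y‖ ≤ ‖f x - f y‖ ∧ ‖f x - f y‖ ≤ (1 + ε) * ‖x - y‖)
    (hww : ∀ x ∈ S, w' (f x) = w x) :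
    (1 - ε) * powerRadius S w ≤ powerRadius (f '' S) w' ∧
      powerRadius (f '' S) w' ≤ (1 + ε) * powerRadius S w :=
  ⟨mul_powerRadius_le_image hS (by linarith) (by linarith) (fun x hx y hy => (hf x hx y hy).1) hww,
    powerRadius_image_le_mul hS (by linarith) (fun x hx y hy => (hf x hx y hy).2) hww⟩

/-- Stability of the weighted smallest enclosing ball radius under maps preserving
distances up to (1±ε) and preserving weights. -/
theorem stmt_19 {d m : ℕ} (S : Set (EuclideanSpace ℝ (Fin d))) (hS : S.Finite)
    (ε : ℝ) (hε0 : 0 ≤ ε) (hε1 : ε < 1)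
    (w : EuclideanSpace ℝ (Fin d) → ℝ) (w' : EuclideanSpace ℝ (Fin m) → ℝ)
    (hw : ∀ x ∈ S, 0 ≤ w x)
    (f : EuclideanSpace ℝ (Fin d) → EuclideanSpace ℝ (Fin m))
    (hf : ∀ x ∈ S, ∀ y ∈ S,
      (1 - ε) * ‖x - y‖ ≤ ‖f x - f y‖ ∧ ‖f x - f y‖ ≤ (1 + ε) * ‖x - y‖)
    (hww : ∀ x ∈ S, w' (f x) = w x) :
    (1 - ε) * powerRadius S w ≤ powerRadius (f '' S) w' ∧
      powerRadius (f '' S) w' ≤ (1 + ε) * powerRadius S w :=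
  stmt_19_general S hS ε hε0 hε1 w w' f hf hww
end
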